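/- For every finite nonempty set S of positive integers, there exists a connected signed bipartite graph whose signed degree set equals S. -/

import Mathlib

/-!
Let `S.rank x` be the number of elements of `S` below `x`; it numbers the elements
`a₀ < ⋯ < a_{k-1}` of `S`. Take both parts to be `{1, …, max S}` and join `x` to `y` by a positive
edge iff `S.rank x + S.rank y < k`, with no negative edges. The relation is symmetric, so both parts
have the same degrees, and the neighbours of `x` are exactly the `y ≤ a_{k-1-rank x}`; so `x` has
degree `a_{k-1-rank x}`, which runs over all of `S` as `x` does. Since `S.rank 1 = 0`, the vertex
`1` is joined to the whole other part and the graph is connected.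
-/

/-- A signed bipartite graph `G(U,V)`: a simple bipartite graph with nonempty
finite parts `U` and `V` in which each edge is labeled positive or negative. -/
structure SignedBipartiteGraph where
  U : Type
  V : Type
  [fU : Fintype U]
  [fV : Fintype V]
  [dU : DecidableEq U]
  [dV : DecidableEq V]
  nU : Nonempty U
  nV : Nonempty V
  /-- `pos u v = true` iff there is a positive edge `uv`. -/
  pos : U → V → Bool
  /-- `neg u v = true` iff there is a negative edge `uv`. -/
  neg : U → V → Bool
  /-- An edge cannot be both positive and negative (simple graph). -/
  disj : ∀ u v, ¬(pos u v = true ∧ neg u v = true)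

namespace SignedBipartiteGraph

attribute [instance] fU fV dU dV

variable (G : SignedBipartiteGraph)

/-- Adjacency of the underlying bipartite graph on `U ⊕ V`. -/
def adjFun : (G.U ⊕ G.V) → (G.U ⊕ G.V) → Prop
  | Sum.inl u, Sum.inr v => G.pos u v = true ∨ G.neg u v = true
  | Sum.inr v, Sum.inl u => G.pos u v = true ∨ G.neg u v = true
  | _, _ => False

/-- The underlying simple graph on `U ⊕ V`. -/
def graph : SimpleGraph (G.U ⊕ G.V) where
  Adj := G.adjFun
  symm := by constructor; intro a b h; cases a <;> cases b <;> simp_all [adjFun]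
  loopless := by constructor; intro a h; cases a <;> simp_all [adjFun]

/-- The signed bipartite graph is connected if its underlying graph is. -/
def Connected : Prop := G.graph.Connected

/-- Signed degree of a vertex in `U`: positive edges minus negative edges. -/
def sdegU (u : G.U) : ℤ :=
  ((Finset.univ.filter fun v => G.pos u v = true).card : ℤ) -
  ((Finset.univ.filter fun v => G.neg u v = true).card : ℤ)

/-- Signed degree of a vertex in `V`. -/
def sdegV (v : G.V) : ℤ :=
  ((Finset.univ.filter fun u => G.pos u v = true).card : ℤ) -
  ((Finset.univ.filter fun u => G.neg u v = true).card : ℤ)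

/-- The signed degree set: the set of distinct signed degrees of the vertices. -/
def sdegSet : Set ℤ := Set.range G.sdegU ∪ Set.range G.sdegV

end SignedBipartiteGraph

open Finset

namespace Finset

section Rank

variable {α : Type*} [LinearOrder α] (S : Finset α)

def rank (x : α) : ℕ := #(S.filter (· < x))

variable {S}

lemma rank_mono : Monotone S.rank := fun _ _ hxy ↦
  card_le_card (monotone_filter_right S fun _ _ h ↦ h.trans_le hxy)

lemma rank_lt_rank {D x : α} (hD : D ∈ S) (hDx : D < x) : S.rank D < S.rank x := by
  refine card_lt_card ((ssubset_iff_of_subset ?_).2 ⟨D, mem_filter.2 ⟨hD, hDx⟩, by simp⟩)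
  exact monotone_filter_right S fun _ _ h ↦ h.trans hDx

lemma rank_le_rank_iff {D x : α} (hD : D ∈ S) : S.rank x ≤ S.rank D ↔ x ≤ D :=
  ⟨fun h ↦ not_lt.1 fun hDx ↦ (rank_lt_rank hD hDx).not_ge h, fun h ↦ rank_mono h⟩

lemma rank_lt_card {D : α} (hD : D ∈ S) : S.rank D < #S :=
  card_lt_card (filter_ssubset.2 ⟨D, hD, lt_irrefl D⟩)

lemma rank_lt_card_of_le_max' (hS : S.Nonempty) {x : α} (hx : x ≤ S.max' hS) : S.rank x < #S :=
  ((rank_le_rank_iff (max'_mem S hS)).2 hx).trans_lt (rank_lt_card (max'_mem S hS))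

lemma rank_eq_zero {x : α} (hx : ∀ d ∈ S, x ≤ d) : S.rank x = 0 :=
  card_eq_zero.2 (filter_eq_empty_iff.2 fun d hd ↦ not_lt.2 (hx d hd))

lemma image_rank : S.image S.rank = range #S := by
  have hinj : Set.InjOn S.rank S := StrictMonoOn.injOn fun _ ha _ _ hab ↦ rank_lt_rank ha hab
  refine eq_of_subset_of_card_le (image_subset_iff.2 fun D hD ↦ mem_range.2 (rank_lt_card hD)) ?_
  rw [card_range, card_image_of_injOn hinj]

lemma exists_mem_rank_eq {t : ℕ} (ht : t < #S) : ∃ D ∈ S, S.rank D = t := by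
  have : t ∈ S.image S.rank := by rw [image_rank]; exact mem_range.2 ht
  simpa using this

end Rank

lemma card_filter_univ_coe {α : Type*} (s : Finset α) (p : α → Prop) [DecidablePred p] :
    #(univ.filter fun x : s ↦ p x) = #(s.filter p) := by
  rw [univ_eq_attach, filter_attach, card_map, card_attach]

end Finset

namespace SignedBipartiteGraph

section DoubleCover

variable {α : Type} [DecidableEq α] (s : Finset α) (hs : s.Nonempty) (r : α → α → Prop)
  [DecidableRel r]

def doubleCover : SignedBipartiteGraph where
  U := s
  V := s
  nU := hs.to_subtype
  nV := hs.to_subtype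
  pos x y := decide (r x y)
  neg _ _ := false
  disj _ _ h := Bool.false_ne_true h.2

lemma sdegU_doubleCover (x : s) : (doubleCover s hs r).sdegU x = #(s.filter (r x)) := by
  simp only [sdegU, doubleCover, decide_eq_true_eq, Bool.false_eq_true, filter_false, card_empty,
    Nat.cast_zero, sub_zero]
  exact_mod_cast card_filter_univ_coe s (r x)

lemma sdegV_doubleCover (y : s) : (doubleCover s hs r).sdegV y = #(s.filter (r · y)) := by
  simp only [sdegV, doubleCover, decide_eq_true_eq, Bool.false_eq_true, filter_false, card_empty,
    Nat.cast_zero, sub_zero]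
  exact_mod_cast card_filter_univ_coe s (r · y)

variable {r} [Std.Symm r]

lemma sdegSet_doubleCover :
    (doubleCover s hs r).sdegSet = (fun x ↦ (#(s.filter (r x)) : ℤ)) '' s := by
  have hcol : ∀ y, s.filter (r · y) = s.filter (r y) := fun y ↦
    filter_congr fun x _ ↦ ⟨symm_of r, symm_of r⟩
  have hU : Set.range (doubleCover s hs r).sdegU = Set.range fun x : s ↦ (#(s.filter (r x)) : ℤ) :=
    congrArg Set.range (funext (sdegU_doubleCover s hs r))
  have hV : Set.range (doubleCover s hs r).sdegV = Set.range fun x : s ↦ (#(s.filter (r x)) : ℤ) :=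
    congrArg Set.range (funext fun y ↦ (sdegV_doubleCover s hs r y).trans (by rw [hcol]))
  rw [sdegSet, hU, hV, Set.union_self]
  ext
  simp

lemma connected_doubleCover {x₀ : α} (hx₀ : x₀ ∈ s) (hdom : ∀ y ∈ s, r x₀ y) :
    (doubleCover s hs r).Connected := by
  have hadj : ∀ x y : s, r x y → (doubleCover s hs r).graph.Adj (.inl x) (.inr y) :=
    fun x y h ↦ Or.inl (decide_eq_true h)
  let c : s := ⟨x₀, hx₀⟩
  have hreach : ∀ w, (doubleCover s hs r).graph.Reachable (.inl c) w := by
    rintro (⟨x, hx⟩ | ⟨y, hy⟩)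
    · exact (hadj c c (hdom x₀ hx₀)).reachable.trans
        (hadj ⟨x, hx⟩ c (symm_of r (hdom x hx))).symm.reachable
    · exact (hadj c ⟨y, hy⟩ (hdom y hy)).reachable
  exact (SimpleGraph.connected_iff _).2 ⟨fun a b ↦ (hreach a).symm.trans (hreach b), ⟨.inl c⟩⟩

end DoubleCover

end SignedBipartiteGraph

namespace Finset

variable {S : Finset ℤ}

lemma card_filter_rank_add_lt (hS : S.Nonempty) (hpos : ∀ x ∈ S, 0 < x) {x D : ℤ} (hD : D ∈ S) (hxD : S.rank x + S.rank D + 1 = #S) :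
    (#((Icc 1 (S.max' hS)).filter fun y ↦ S.rank x + S.rank y < #S) : ℤ) = D := by
  have hIcc : (Icc 1 (S.max' hS)).filter (fun y ↦ S.rank x + S.rank y < #S) = Icc 1 D := by
    ext y
    have hyD := rank_le_rank_iff (x := y) hD
    have hDM := le_max' S D hD
    simp only [mem_filter, mem_Icc]
    omega
  rw [hIcc, Int.card_Icc, add_sub_cancel_right, Int.toNat_of_nonneg (hpos D hD).le]

lemma image_card_filter_rank_add_lt (hS : S.Nonempty) (hpos : ∀ x ∈ S, 0 < x) :
    (fun x ↦ (#((Icc 1 (S.max' hS)).filter fun y ↦ S.rank x + S.rank y < #S) : ℤ)) ''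
      ↑(Icc 1 (S.max' hS)) = ↑S := by
  ext D
  simp only [Set.mem_image, mem_coe, mem_Icc]
  constructor
  · rintro ⟨x, ⟨-, hxM⟩, rfl⟩
    have hx := rank_lt_card_of_le_max' hS hxM
    obtain ⟨D, hD, hDx⟩ := exists_mem_rank_eq (show #S - 1 - S.rank x < #S by omega)
    rw [card_filter_rank_add_lt hS hpos hD (by omega)]
    exact hD
  · intro hD
    have hDS := rank_lt_card hD
    obtain ⟨x, hx, hxD⟩ := exists_mem_rank_eq (show #S - 1 - S.rank D < #S by omega)
    exact ⟨x, ⟨hpos x hx, le_max' S x hx⟩, card_filter_rank_add_lt hS hpos hD (by omega)⟩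

end Finset

open SignedBipartiteGraph in
/-- Every finite nonempty set of positive integers is the signed degree set of
some connected signed bipartite graph. -/
theorem signed_degree_set_of_positive (S : Finset ℤ) (hS : S.Nonempty)
    (hpos : ∀ x ∈ S, 0 < x) :
    ∃ G : SignedBipartiteGraph, G.Connected ∧ G.sdegSet = ↑S := by
  let r : ℤ → ℤ → Prop := fun x y ↦ S.rank x + S.rank y < #S
  have : Std.Symm r := ⟨fun _ _ h ↦ by omega⟩
  have h1 : (1 : ℤ) ∈ Icc 1 (S.max' hS) := mem_Icc.2 ⟨le_rfl, hpos _ (max'_mem S hS)⟩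
  have hdom : ∀ y ∈ Icc 1 (S.max' hS), r 1 y := fun y hy ↦ by
    have h0 : S.rank 1 = 0 := rank_eq_zero fun d hd ↦ hpos d hd
    have hy := rank_lt_card_of_le_max' hS (mem_Icc.1 hy).2
    show S.rank 1 + S.rank y < #S
    omega
  exact ⟨doubleCover (Icc 1 (S.max' hS)) ⟨1, h1⟩ r, connected_doubleCover _ _ h1 hdom,
    (sdegSet_doubleCover _ _).trans (image_card_filter_rank_add_lt hS hpos)⟩
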